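/- Let ω ∈ (−1,1), α = (α₁,α₂) ∈ ℝ², τ ∈ ℝ. Then the margins of the bivariate extended skew-normal distribution are univariate extended skew-normal: for every x₂ ∈ ℝ, ∫_ℝ φ₂(x₁,x₂;ω)·Φ(α₁x₁+α₂x₂+τ)/Φ(τ/√(1+α₁²+α₂²+2ωα₁α₂)) dx₁ = φ(x₂)·Φ(α₂* x₂ + τ₂*)/Φ(τ₂*/√(1+α₂*²)), where α₂* = (α₂+ωα₁)/√(1+α₁²(1−ω²)) and τ₂* = τ/√(1+α₁²(1−ω²)); i.e. the second marginal of ESN₂(ω,α,τ) is the univariate extended skew-normal distribution with slant α₂* and extension τ₂* (and symmetrically for the first marginal). -/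

import Mathlib

open MeasureTheory Filter Matrix

/-- standard normal density -/
noncomputable def stdPdf (t : ℝ) : ℝ := Real.exp (-t^2/2) / Real.sqrt (2*Real.pi)

/-- standard normal cdf Φ -/
noncomputable def stdCdf (x : ℝ) : ℝ := ∫ t in Set.Iic x, stdPdf t

/-- univariate extended skew-normal cdf Φ_{α,τ} -/
noncomputable def esnCdf (α τ x : ℝ) : ℝ :=
  ∫ t in Set.Iic x, stdPdf t * stdCdf (α*t+τ) / stdCdf (τ / Real.sqrt (1+α^2))

/-- bivariate standard normal density with correlation ω -/
noncomputable def phi2 (ω : ℝ) (x : ℝ × ℝ) : ℝ :=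
  Real.exp (-(x.1^2 - 2*ω*x.1*x.2 + x.2^2)/(2*(1-ω^2))) / (2*Real.pi*Real.sqrt (1-ω^2))

/-- bivariate extended skew-normal density -/
noncomputable def esn2Density (ω a1 a2 τ : ℝ) (x : ℝ × ℝ) : ℝ :=
  phi2 ω x * stdCdf (a1*x.1 + a2*x.2 + τ) / stdCdf (τ / Real.sqrt (1 + a1^2 + a2^2 + 2*ω*a1*a2))

/-- bivariate extended skew-normal distribution ESN₂(ω,α,τ) -/
noncomputable def esn2 (ω a1 a2 τ : ℝ) : Measure (ℝ × ℝ) :=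
  volume.withDensity (fun x => ENNReal.ofReal (esn2Density ω a1 a2 τ x))

/-- marginal slant parameter α_j*; `aj` is α_j and `ak` is α_{3-j} -/
noncomputable def astar (ω aj ak : ℝ) : ℝ := (aj + ω*ak) / Real.sqrt (1 + ak^2*(1-ω^2))

/-- marginal extension parameter τ_j*; `ak` is α_{3-j} -/
noncomputable def tstar (ω ak τ : ℝ) : ℝ := τ / Real.sqrt (1 + ak^2*(1-ω^2))

/-- ᾱ_j = √(1+α_j*²); `aj` is α_j and `ak` is α_{3-j} -/
noncomputable def abar (ω aj ak : ℝ) : ℝ := Real.sqrt (1 + (astar ω aj ak)^2)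

section Helpers
open Real

lemma stdPdf_eq' : stdPdf = fun t => Real.exp (-(1/2) * t^2) / Real.sqrt (2*Real.pi) := by
  funext t; unfold stdPdf; ring_nf

lemma stdPdf_nonneg (t : ℝ) : 0 ≤ stdPdf t := by
  unfold stdPdf; positivity

lemma continuous_stdPdf : Continuous stdPdf := by
  unfold stdPdf; fun_prop

lemma integrable_stdPdf : Integrable stdPdf := by
  rw [stdPdf_eq']
  exact (integrable_exp_neg_mul_sq (by norm_num)).div_const _

lemma integral_stdPdf : ∫ t, stdPdf t = 1 := by
  rw [stdPdf_eq']
  rw [MeasureTheory.integral_div, integral_gaussian]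
  rw [show Real.pi / (1/2) = 2 * Real.pi by ring]
  rw [div_self (by positivity : Real.sqrt (2*Real.pi) ≠ 0)]

lemma stdCdf_nonneg (x : ℝ) : 0 ≤ stdCdf x :=
  integral_nonneg fun t => stdPdf_nonneg t

lemma stdCdf_le_one (x : ℝ) : stdCdf x ≤ 1 := by
  rw [stdCdf, ← integral_stdPdf]
  exact setIntegral_le_integral integrable_stdPdf (Filter.Eventually.of_forall stdPdf_nonneg)

lemma stdCdf_shift (a d : ℝ) : stdCdf (d + a) = ∫ s in Set.Iic d, stdPdf (s + a) := by
  rw [stdCdf, ← integral_indicator measurableSet_Iic, ← integral_indicator measurableSet_Iic,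
    ← integral_add_right_eq_self (fun x => (Set.Iic (d+a)).indicator stdPdf x) a]
  congr 1; funext s
  by_cases h : s ≤ d <;>
    simp [Set.indicator_apply, Set.mem_Iic, h, add_le_add_iff_right]

lemma stdCdf_scale {r : ℝ} (hr : 0 < r) (d : ℝ) :
    ∫ s in Set.Iic d, stdPdf (s / r) = r * stdCdf (d / r) := by
  rw [stdCdf, ← integral_indicator measurableSet_Iic, ← integral_indicator measurableSet_Iic]
  have h : (fun s => (Set.Iic d).indicator (fun s => stdPdf (s/r)) s)
      = fun s => (Set.Iic (d/r)).indicator stdPdf (s / r) := by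
    funext s
    by_cases h : s ≤ d <;>
      simp [Set.indicator_apply, Set.mem_Iic, h, div_le_div_iff_of_pos_right hr]
  rw [h, MeasureTheory.Measure.integral_comp_div (fun s => (Set.Iic (d/r)).indicator stdPdf s) r,
    abs_of_pos hr, smul_eq_mul]

lemma inner_gauss (c s : ℝ) :
    ∫ u : ℝ, stdPdf u * stdPdf (s + c*u)
      = stdPdf (s / Real.sqrt (1+c^2)) / Real.sqrt (1+c^2) := by
  have hk : (0:ℝ) < 1 + c^2 := by positivity
  have h2π : (0:ℝ) ≤ 2*Real.pi := by positivity
  have h1 : (fun u : ℝ => stdPdf u * stdPdf (s + c*u))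
      = fun u => Real.exp (-(s^2/(2*(1+c^2)))) / (2*Real.pi)
          * Real.exp (-((1+c^2)/2) * (u + c*s/(1+c^2))^2) := by
    funext u
    unfold stdPdf
    rw [div_mul_div_comm, ← Real.exp_add, Real.mul_self_sqrt h2π,
      div_mul_eq_mul_div, ← Real.exp_add]
    congr 2
    field_simp
    ring
  rw [h1, MeasureTheory.integral_const_mul,
    integral_add_right_eq_self (fun v => Real.exp (-((1+c^2)/2) * v^2)) (c*s/(1+c^2)),
    integral_gaussian]
  have hk0 : Real.sqrt (1+c^2) ≠ 0 := by positivity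
  have hp0 : Real.sqrt (2*Real.pi) ≠ 0 := by positivity
  have hs1 : Real.sqrt (Real.pi / ((1+c^2)/2)) = Real.sqrt (2*Real.pi) / Real.sqrt (1+c^2) := by
    rw [show Real.pi/((1+c^2)/2) = (2*Real.pi)/(1+c^2) by field_simp, Real.sqrt_div h2π]
  have hs2 : (s / Real.sqrt (1+c^2))^2 = s^2/(1+c^2) := by rw [div_pow, Real.sq_sqrt hk.le]
  unfold stdPdf
  rw [hs1, hs2, show -(s^2/(1+c^2))/2 = -(s^2/(2*(1+c^2))) by rw [neg_div, div_div, mul_comm]]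
  rw [div_div, ← Real.mul_self_sqrt h2π]
  field_simp
  ring
  rw [Real.sq_sqrt (sq_nonneg _)]

lemma integrable_F (c d : ℝ) :
    Integrable (fun p : ℝ × ℝ => stdPdf p.1 * stdPdf (p.2 + c * p.1))
      (volume.prod (volume.restrict (Set.Iic d))) := by
  have hcont : Continuous (fun p : ℝ × ℝ => stdPdf p.1 * stdPdf (p.2 + c * p.1)) :=
    (continuous_stdPdf.comp continuous_fst).mul
      (continuous_stdPdf.comp (continuous_snd.add (continuous_const.mul continuous_fst)))
  rw [MeasureTheory.integrable_prod_iff hcont.aestronglyMeasurable]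
  constructor
  · refine Filter.Eventually.of_forall fun u => ?_
    exact ((integrable_stdPdf.comp_add_right (c*u)).const_mul (stdPdf u)).integrableOn
  · have hbound : ∀ u : ℝ, (∫ s in Set.Iic d, ‖stdPdf u * stdPdf (s + c * u)‖) ≤ stdPdf u := by
      intro u
      have h1 : (∫ s in Set.Iic d, ‖stdPdf u * stdPdf (s + c * u)‖)
          = stdPdf u * ∫ s in Set.Iic d, stdPdf (s + c * u) := by
        rw [← MeasureTheory.integral_const_mul]
        congr 1; funext s
        rw [Real.norm_of_nonneg (mul_nonneg (stdPdf_nonneg u) (stdPdf_nonneg _))]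
      rw [h1, ← stdCdf_shift]
      calc stdPdf u * stdCdf (d + c*u) ≤ stdPdf u * 1 :=
            mul_le_mul_of_nonneg_left (stdCdf_le_one _) (stdPdf_nonneg u)
        _ = stdPdf u := mul_one _
    refine integrable_stdPdf.mono ?_ (Filter.Eventually.of_forall fun u => ?_)
    · exact (hcont.norm.aestronglyMeasurable.integral_prod_right')
    · rw [Real.norm_of_nonneg (integral_nonneg fun s => norm_nonneg _),
        Real.norm_of_nonneg (stdPdf_nonneg u)]
      exact hbound u

lemma lemA (c d : ℝ) :
    ∫ u : ℝ, stdPdf u * stdCdf (c*u + d) = stdCdf (d / Real.sqrt (1+c^2)) := by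
  have hk : (0:ℝ) < Real.sqrt (1 + c^2) := by positivity
  have h1 : (fun u : ℝ => stdPdf u * stdCdf (c*u + d))
      = fun u => ∫ s in Set.Iic d, stdPdf u * stdPdf (s + c*u) := by
    funext u
    rw [add_comm (c*u) d, stdCdf_shift, ← MeasureTheory.integral_const_mul]
  rw [h1, MeasureTheory.integral_integral_swap (integrable_F c d)]
  have h2 : (fun s => ∫ u : ℝ, stdPdf u * stdPdf (s + c*u))
      = fun s => stdPdf (s / Real.sqrt (1+c^2)) / Real.sqrt (1+c^2) := by
    funext s; exact inner_gauss c s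
  rw [h2]
  rw [MeasureTheory.integral_div, stdCdf_scale hk, mul_comm, mul_div_assoc,
    div_self hk.ne', mul_one]

lemma phi2_factor {ω : ℝ} (hω : ω^2 < 1) (x1 x2 : ℝ) :
    phi2 ω (x1, x2) = stdPdf x2 * stdPdf ((x1 - ω*x2) / Real.sqrt (1-ω^2))
      / Real.sqrt (1-ω^2) := by
  have h1 : (0:ℝ) < 1 - ω^2 := by linarith
  have h2π : (0:ℝ) ≤ 2*Real.pi := by positivity
  unfold phi2 stdPdf
  rw [div_pow, Real.sq_sqrt h1.le, div_mul_div_comm, ← Real.exp_add,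
    Real.mul_self_sqrt h2π, div_div]
  congr 2
  field_simp
  ring


end Helpers

/-- The second marginal of ESN₂(ω,α,τ) is univariate extended skew-normal with
slant α₂* = (α₂+ωα₁)/√(1+α₁²(1−ω²)) and extension τ₂* = τ/√(1+α₁²(1−ω²)). -/
theorem esn2_marginal_density
    (ω : ℝ) (hω : ω ∈ Set.Ioo (-1 : ℝ) 1) (a1 a2 τ : ℝ) (x2 : ℝ) :
    ∫ x1 : ℝ, esn2Density ω a1 a2 τ (x1, x2) =
      stdPdf x2 * stdCdf (astar ω a2 a1 * x2 + tstar ω a1 τ) /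
        stdCdf (tstar ω a1 τ / Real.sqrt (1 + (astar ω a2 a1)^2)) := by

  have hω2 : ω^2 < 1 := by nlinarith [hω.1, hω.2]
  have h1 : (0:ℝ) < 1 - ω^2 := by linarith
  set σ := Real.sqrt (1-ω^2) with hσdef
  have hσ : 0 < σ := Real.sqrt_pos.mpr h1
  have hσ2 : σ^2 = 1 - ω^2 := Real.sq_sqrt h1.le
  set K := 1 + a1^2*(1-ω^2) with hKdef
  have hK : (0:ℝ) < K := by nlinarith
  have hsK : (0:ℝ) < Real.sqrt K := Real.sqrt_pos.mpr hK
  -- the two normalizing constants coincide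
  have hconst : τ / Real.sqrt (1 + a1^2 + a2^2 + 2*ω*a1*a2)
      = tstar ω a1 τ / Real.sqrt (1 + (astar ω a2 a1)^2) := by
    rw [tstar, astar, div_pow, Real.sq_sqrt hK.le, ← hKdef]
    rw [div_div, ← Real.sqrt_mul hK.le]
    congr 2
    field_simp
    ring
  set C := stdCdf (tstar ω a1 τ / Real.sqrt (1 + (astar ω a2 a1)^2)) with hC
  set d := a1*(ω*x2) + (a2*x2 + τ) with hd
  set G : ℝ → ℝ := fun u => stdPdf u * stdCdf (a1*σ*u + d) with hG
  have harg : ∀ x1 : ℝ, a1*σ*((x1 - ω*x2)/σ) + d = a1*x1 + a2*x2 + τ := by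
    intro x1; rw [hd]; field_simp; ring
  have hA : (fun x1 : ℝ => esn2Density ω a1 a2 τ (x1, x2))
      = fun x1 => stdPdf x2 / σ / C * G ((x1 - ω*x2)/σ) := by
    funext x1
    rw [esn2Density, hconst, ← hC, hG]
    simp only []
    rw [harg x1, phi2_factor hω2]
    ring
  rw [hA, MeasureTheory.integral_const_mul]
  have hB : (∫ x1 : ℝ, G ((x1 - ω*x2)/σ)) = ∫ y : ℝ, G (y/σ) :=
    integral_sub_right_eq_self (fun y => G (y/σ)) (ω*x2)
  rw [hB, MeasureTheory.Measure.integral_comp_div G σ, hG]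
  rw [lemA (a1*σ) d]
  have hc2 : 1 + (a1*σ)^2 = K := by rw [mul_pow, hσ2, hKdef]
  have hargs : d / Real.sqrt (1 + (a1*σ)^2)
      = astar ω a2 a1 * x2 + tstar ω a1 τ := by
    rw [hc2, hd, astar, tstar, ← hKdef]
    field_simp
    ring
  rw [hargs, abs_of_pos hσ, smul_eq_mul]
  generalize stdCdf (astar ω a2 a1 * x2 + tstar ω a1 τ) = S
  rw [div_div, div_mul_eq_mul_div, show stdPdf x2 * (σ * S) = σ * (stdPdf x2 * S) by ring,
    mul_div_mul_left _ _ hσ.ne']
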